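/- arXiv:2309.01231 — 6 statements merged into one kernel-verified Lean document; each statement's English description precedes it below -/
import Mathlib

section
/- In the game saliquant, if 3 divides n (with n a positive integer), then SG(2n) ≤ n − 2; and if 5 divides n, then SG(4n) ≤ 2n − 3. -/
/-- Sprague–Grundy values for the game saliquant: the options of a position `n`
are the positions `n - k` where `1 ≤ k ≤ n` and `k` does not divide `n`, and
`sg n` is the least nonnegative integer not among the values of the options. -/
noncomputable def sg : ℕ → ℕ
  | n => sInf {m : ℕ | ∀ k, 1 ≤ k → k ≤ n → ¬ k ∣ n → sg (n - k) ≠ m}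
decreasing_by omega

lemma sg_eq (n : ℕ) :
    sg n = sInf {m : ℕ | ∀ k, 1 ≤ k → k ≤ n → ¬ k ∣ n → sg (n - k) ≠ m} := by
  rw [sg]

lemma sg_le {n B : ℕ} (h : ∀ k, 1 ≤ k → k ≤ n → ¬ k ∣ n → sg (n - k) ≠ B) :
    sg n ≤ B := by
  rw [sg_eq]
  exact Nat.sInf_le h

lemma sg_key : ∀ n : ℕ, sg n ≤ (n - 1) / 2 ∧ (Odd n → sg n = (n - 1) / 2) := by
  intro n
  induction n using Nat.strong_induction_on with
  | _ n ih =>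
  have hub : sg n ≤ (n - 1) / 2 := by
    apply sg_le
    intro k hk1 hkn hknd
    have hk2 : 2 ≤ k := by
      rcases Nat.lt_or_ge k 2 with h | h
      · interval_cases k
        · exact absurd (one_dvd n) hknd
      · exact h
    have hkne : k ≠ n := by rintro rfl; exact hknd dvd_rfl
    have hlt : n - k < n := by omega
    have := (ih (n - k) hlt).1
    omega
  refine ⟨hub, fun hodd => ?_⟩
  refine le_antisymm hub ?_
  rw [sg_eq]
  apply le_csInf ⟨(n - 1) / 2, ?_⟩
  · rintro m hm
    by_contra hlt
    push_neg at hlt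
    obtain ⟨t, rfl⟩ := hodd
    set j := m with hj
    have hjlt : 2 * j + 1 < 2 * t + 1 := by omega
    have hk : (2 * t + 1) - (2 * j + 1 + 0) = 2 * (t - j) := by omega
    have hkey := hm (2 * (t - j)) (by omega) (by omega) ?_
    · have hsub : (2 * t + 1) - 2 * (t - j) = 2 * j + 1 := by omega
      rw [hsub] at hkey
      have := (ih (2 * j + 1) (by omega)).2 ⟨j, by ring⟩
      simp only [Nat.add_sub_cancel] at this
      rw [Nat.mul_div_cancel_left j (by norm_num : 0 < 2)] at this
      exact hkey this
    · intro hdvd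
      have h2 : 2 ∣ 2 * t + 1 := dvd_trans ⟨t - j, rfl⟩ hdvd
      omega
  · intro k hk1 hkn hknd
    have hk2 : 2 ≤ k := by
      rcases Nat.lt_or_ge k 2 with h | h
      · interval_cases k
        · exact absurd (one_dvd n) hknd
      · exact h
    have hkne : k ≠ n := by rintro rfl; exact hknd dvd_rfl
    have := (ih (n - k) (by omega)).1
    omega

theorem saliquant_mult_bounds (n : ℕ) (hn : 0 < n) :
    (3 ∣ n → sg (2 * n) ≤ n - 2) ∧ (5 ∣ n → sg (4 * n) ≤ 2 * n - 3) := by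
  constructor
  · intro h3
    have hn3 : 3 ≤ n := Nat.le_of_dvd hn h3
    apply sg_le
    intro k hk1 hkn hknd
    have hk4 : 4 ≤ k := by
      rcases Nat.lt_or_ge k 4 with h | h
      · interval_cases k
        · exact absurd (one_dvd _) hknd
        · exact absurd ⟨n, by ring⟩ hknd
        · exact absurd (Dvd.dvd.mul_left h3 2) hknd
      · exact h
    have hkne : k ≠ 2 * n := by rintro rfl; exact hknd dvd_rfl
    have := (sg_key (2 * n - k)).1
    omega
  · intro h5
    have hn5 : 5 ≤ n := Nat.le_of_dvd hn h5
    apply sg_le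
    intro k hk1 hkn hknd
    rcases Nat.lt_or_ge k 6 with h | h
    · interval_cases k
      · exact absurd (one_dvd _) hknd
      · exact absurd ⟨2 * n, by ring⟩ hknd
      · -- k = 3 : option is odd, sg = 2n - 2 ≠ 2n - 3
        have hodd : Odd (4 * n - 3) := ⟨2 * n - 2, by omega⟩
        have := (sg_key (4 * n - 3)).2 hodd
        omega
      · exact absurd ⟨n, by ring⟩ hknd
      · exact absurd (Dvd.dvd.mul_left h5 4) hknd
    · have hkne : k ≠ 4 * n := by rintro rfl; exact hknd dvd_rfl
      have := (sg_key (4 * n - k)).1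
      omega
end

section
/- In the game saliquant, if p is the smallest prime divisor of a positive integer n (in particular p ∣ n), then SG(n) ≥ SG(((p − 1)/p)·n); in particular, SG(2n) ≥ SG(n) for every positive integer n. -/
lemma sg_set_nonempty (n : ℕ) :
    {m : ℕ | ∀ k, 1 ≤ k → k ≤ n → ¬ k ∣ n → sg (n - k) ≠ m}.Nonempty := by
  refine ⟨(Finset.range (n+1)).sup (fun j => sg (n - j)) + 1, ?_⟩
  intro k _ hk _
  have : sg (n - k) ≤ (Finset.range (n+1)).sup (fun j => sg (n - j)) :=
    Finset.le_sup (f := fun j => sg (n - j)) (Finset.mem_range.mpr (by omega))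
  omega

lemma sg_exists_option {n v : ℕ} (h : v < sg n) :
    ∃ k, 1 ≤ k ∧ k ≤ n ∧ ¬ k ∣ n ∧ sg (n - k) = v := by
  by_contra hc
  push_neg at hc
  have hv : v ∈ {m : ℕ | ∀ k, 1 ≤ k → k ≤ n → ¬ k ∣ n → sg (n - k) ≠ m} := by
    intro k h1 h2 h3
    exact hc k h1 h2 h3
  have := Nat.sInf_le hv
  rw [sg_eq] at h
  omega

theorem saliquant_smallest_prime_lower_bound :
    (∀ n p : ℕ, 0 < n → p.Prime → p ∣ n →
      (∀ q : ℕ, q.Prime → q ∣ n → p ≤ q) →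
      sg ((p - 1) * (n / p)) ≤ sg n) ∧
    (∀ n : ℕ, 0 < n → sg n ≤ sg (2 * n)) := by
  have main : ∀ n p : ℕ, 0 < n → p.Prime → p ∣ n →
      (∀ q : ℕ, q.Prime → q ∣ n → p ≤ q) →
      sg ((p - 1) * (n / p)) ≤ sg n := by
    intro n p hn hp hpn hmin
    set t := n / p with ht
    have hp2 : 2 ≤ p := hp.two_le
    have hnt : n = p * t := (Nat.div_mul_cancel hpn).symm.trans (by ring)
    have ht1 : 1 ≤ t := by
      rcases Nat.eq_zero_or_pos t with h | h
      · rw [h, mul_zero] at hnt; omega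
      · exact h
    set m := (p - 1) * t with hm
    have hmn : m = n - t := by
      rw [hm, hnt, Nat.sub_mul, one_mul]
    -- largest proper divisor of n is t
    have hlpd : ∀ d : ℕ, d ∣ n → d < n → d ≤ t := by
      intro d hd hdn
      obtain ⟨s, hs⟩ := hd
      have hs1 : 1 < s := by
        rcases Nat.lt_or_ge s 2 with h | h
        · interval_cases s <;> omega
        · omega
      obtain ⟨q, hq, hqs⟩ := Nat.exists_prime_and_dvd (by omega : s ≠ 1)
      have hqn : q ∣ n := hs ▸ Dvd.dvd.mul_left hqs d
      have hpq : p ≤ q := hmin q hq hqn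
      have hqle : q ≤ s := Nat.le_of_dvd (by omega) hqs
      have : d * p ≤ d * s := Nat.mul_le_mul_left d (by omega)
      have : d * p ≤ n := by omega
      rw [hnt] at this
      nlinarith
    rw [sg_eq n]
    refine le_csInf (sg_set_nonempty n) ?_
    intro w hw
    by_contra hlt
    push_neg at hlt
    obtain ⟨k, hk1, hk2, hk3, hk4⟩ := sg_exists_option hlt
    have hkm : k ≤ m := hk2
    have h1 : 1 ≤ k + t := by omega
    have h2 : k + t ≤ n := by omega
    have h3 : ¬ (k + t) ∣ n := by
      intro hdvd
      rcases Nat.lt_or_ge (k + t) n with h | h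
      · have := hlpd (k + t) hdvd h; omega
      · have hkeq : k + t = n := le_antisymm h2 h
        have : k = m := by omega
        exact hk3 (this ▸ dvd_refl m)
    have := hw (k + t) h1 h2 h3
    have hsub : n - (k + t) = m - k := by omega
    rw [hsub, hk4] at this
    exact this rfl
  refine ⟨main, ?_⟩
  intro n hn
  have := main (2 * n) 2 (by omega) Nat.prime_two ⟨n, rfl⟩
    (fun q hq _ => hq.two_le)
  simpa using this
end

section
/- In the game saliquant, if n and k are positive integers with k ≤ n and SG(2n) = n − k, then 2k − 1 divides n. -/
/-- Joint statement: `sg (2t+1) = t` and, for `t ≥ 1`, `sg (2t) + 1 ≤ t`. -/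
lemma sg_spec : ∀ t : ℕ, sg (2 * t + 1) = t ∧ (1 ≤ t → sg (2 * t) + 1 ≤ t) := by
  intro t
  induction t using Nat.strong_induction_on with
  | _ t ih =>
    have hodd : ∀ s < t, sg (2 * s + 1) = s := fun s hs => (ih s hs).1
    have heven : ∀ s, s < t → 1 ≤ s → sg (2 * s) + 1 ≤ s := fun s hs h1 => (ih s hs).2 h1
    constructor
    · -- sg (2t+1) = t
      rw [sg_eq]
      have hmem : t ∈ {m : ℕ | ∀ k, 1 ≤ k → k ≤ 2 * t + 1 → ¬ k ∣ 2 * t + 1 →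
          sg (2 * t + 1 - k) ≠ m} := by
        intro k hk1 hk2 hkd
        have hk1' : k ≠ 1 := by rintro rfl; exact hkd (one_dvd _)
        have hkm : k ≠ 2 * t + 1 := by rintro rfl; exact hkd dvd_rfl
        -- so 2 ≤ k ≤ 2t, and j := 2t+1-k satisfies 1 ≤ j ≤ 2t-1
        rcases Nat.even_or_odd (2 * t + 1 - k) with he | ho
        · obtain ⟨s, hs⟩ := he
          have hs' : 2 * t + 1 - k = 2 * s := by omega
          have h1s : 1 ≤ s := by omega
          have hst : s < t := by omega
          have := heven s hst h1s
          rw [hs']; omega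
        · obtain ⟨s, hs⟩ := ho
          have hs' : 2 * t + 1 - k = 2 * s + 1 := by omega
          have hst : s < t := by omega
          rw [hs', hodd s hst]; omega
      refine le_antisymm (Nat.sInf_le hmem) ?_
      by_contra hlt
      push_neg at hlt
      have hne := Nat.sInf_mem ⟨t, hmem⟩
      set v := sInf {m : ℕ | ∀ k, 1 ≤ k → k ≤ 2 * t + 1 → ¬ k ∣ 2 * t + 1 →
          sg (2 * t + 1 - k) ≠ m} with hv
      have hvt : v < t := hlt
      -- move k = 2*(t-v) lands on 2v+1 with sg = v
      have := hne (2 * (t - v)) (by omega) (by omega) (by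
        intro hdvd
        have : (2 : ℕ) ∣ 2 * t + 1 := dvd_trans ⟨t - v, rfl⟩ hdvd
        omega)
      apply this
      have : 2 * t + 1 - 2 * (t - v) = 2 * v + 1 := by omega
      rw [this, hodd v hvt]
    · -- sg (2t) + 1 ≤ t for t ≥ 1
      intro ht
      rw [sg_eq]
      have hmem : t - 1 ∈ {m : ℕ | ∀ k, 1 ≤ k → k ≤ 2 * t → ¬ k ∣ 2 * t →
          sg (2 * t - k) ≠ m} := by
        intro k hk1 hk2 hkd
        have hk1' : k ≠ 1 := by rintro rfl; exact hkd (one_dvd _)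
        have hkm : k ≠ 2 * t := by rintro rfl; exact hkd dvd_rfl
        rcases Nat.even_or_odd (2 * t - k) with he | ho
        · obtain ⟨s, hs⟩ := he
          have hs' : 2 * t - k = 2 * s := by omega
          have h1s : 1 ≤ s := by omega
          have hst : s < t := by omega
          have := heven s hst h1s
          rw [hs']; omega
        · obtain ⟨s, hs⟩ := ho
          have hs' : 2 * t - k = 2 * s + 1 := by omega
          have hst : s < t := by omega
          rw [hs', hodd s hst]; omega
      have := Nat.sInf_le hmem
      omega

lemma sg_odd (t : ℕ) : sg (2 * t + 1) = t := (sg_spec t).1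

theorem saliquant_divisibility (n k : ℕ) (hn : 0 < n) (hk : 0 < k) (hkn : k ≤ n)
    (h : sg (2 * n) = n - k) : (2 * k - 1) ∣ n := by
  by_contra hnd
  have hmem : sg (2 * n) ∈ {m : ℕ | ∀ k, 1 ≤ k → k ≤ 2 * n → ¬ k ∣ 2 * n →
      sg (2 * n - k) ≠ m} := by
    rw [sg_eq]
    apply Nat.sInf_mem
    refine ⟨n - 1, ?_⟩
    intro k hk1 hk2 hkd
    have hk1' : k ≠ 1 := by rintro rfl; exact hkd (one_dvd _)
    have hkm : k ≠ 2 * n := by rintro rfl; exact hkd dvd_rfl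
    rcases Nat.even_or_odd (2 * n - k) with he | ho
    · obtain ⟨s, hs⟩ := he
      have hs' : 2 * n - k = 2 * s := by omega
      have h1s : 1 ≤ s := by omega
      have hst : s < n := by omega
      have := (sg_spec s).2 h1s
      rw [hs']; omega
    · obtain ⟨s, hs⟩ := ho
      have hs' : 2 * n - k = 2 * s + 1 := by omega
      have hst : s < n := by omega
      rw [hs', sg_odd s]; omega
  rw [h] at hmem
  -- the move 2k-1 is legal since 2k-1 ∤ 2n
  have hdvd : ¬ (2 * k - 1) ∣ 2 * n := by
    intro hd
    apply hnd
    have hcop : Nat.Coprime (2 * k - 1) 2 := by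
      have : ¬ (2 : ℕ) ∣ (2 * k - 1) := by omega
      rcases Nat.coprime_or_dvd_of_prime Nat.prime_two (2 * k - 1) with hc | hc
      · exact hc.symm
      · exact absurd hc this
    have hd' : (2 * k - 1) ∣ n * 2 := by rwa [Nat.mul_comm n 2]
    exact Nat.Coprime.dvd_of_dvd_mul_right hcop hd'
  have := hmem (2 * k - 1) (by omega) (by omega) hdvd
  apply this
  have : 2 * n - (2 * k - 1) = 2 * (n - k) + 1 := by omega
  rw [this, sg_odd]
end

section
/- In the game saliquant, for every b ≥ 1 and every a ∈ {0, 1, 2, 4}, SG((2a + 1)·2^b) = (2a + 1)·2^(b−1) − a − 1. -/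
lemma sg_le_of (n T : ℕ) (h1 : ∀ k, 1 ≤ k → k ≤ n → ¬ k ∣ n → sg (n - k) ≠ T) : sg n ≤ T := by
  rw [sg]; exact Nat.sInf_le h1

lemma sg_eq_of (n T : ℕ)
    (h1 : ∀ k, 1 ≤ k → k ≤ n → ¬ k ∣ n → sg (n - k) ≠ T)
    (h2 : ∀ v, v < T → ∃ k, 1 ≤ k ∧ k ≤ n ∧ ¬ k ∣ n ∧ sg (n - k) = v) :
    sg n = T := by
  rw [sg]
  refine le_antisymm (Nat.sInf_le h1) ?_
  by_contra h
  push_neg at h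
  have hmem := Nat.sInf_mem (s := {m : ℕ | ∀ k, 1 ≤ k → k ≤ n → ¬ k ∣ n → sg (n - k) ≠ m}) ⟨T, h1⟩
  obtain ⟨k, hk1, hk2, hk3, hk4⟩ := h2 _ h
  exact hmem k hk1 hk2 hk3 hk4

lemma sg_odd_even : ∀ n : ℕ, (Odd n → 2 * sg n + 1 = n) ∧ (2 ≤ n → Even n → 2 * sg n + 2 ≤ n) := by
  intro n
  induction n using Nat.strong_induction_on with
  | _ n ih =>
  constructor
  · rintro ⟨c, hc⟩
    have h : sg n = c := by
      apply sg_eq_of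
      · intro k hk1 hk2 hk3
        have hk2' : k ≠ n := fun h => hk3 (h ▸ dvd_refl n)
        have hk1' : k ≠ 1 := fun h => hk3 (h ▸ one_dvd n)
        set m := n - k with hm
        have hmlt : m < n := by omega
        rcases Nat.even_or_odd m with ⟨e, he⟩ | ⟨e, he⟩
        · -- m even; m ≥ 2 since m ≥ 1 and even... m ≥ 1 since k ≠ n
          have hm1 : 1 ≤ m := by omega
          have := (ih m hmlt).2 (by omega) ⟨e, he⟩
          omega
        · have := (ih m hmlt).1 ⟨e, he⟩
          omega
      · intro v hv
        refine ⟨n - (2 * v + 1), by omega, by omega, ?_, ?_⟩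
        · intro hdvd
          have h2d : (2:ℕ) ∣ n := dvd_trans ⟨c - v, by omega⟩ hdvd
          obtain ⟨w, hw⟩ := h2d
          omega
        · have heq : n - (n - (2 * v + 1)) = 2 * v + 1 := by omega
          rw [heq]
          have := (ih (2 * v + 1) (by omega)).1 ⟨v, by omega⟩
          omega
    omega
  · rintro h2 ⟨t, ht⟩
    have h : sg n ≤ t - 1 := by
      apply sg_le_of
      intro k hk1 hk2 hk3
      have hk2' : k ≠ n := fun h => hk3 (h ▸ dvd_refl n)
      have hk1' : k ≠ 1 := fun h => hk3 (h ▸ one_dvd n)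
      have hk1'' : k ≠ 2 := fun h => hk3 (h ▸ ⟨t, by omega⟩)
      set m := n - k with hm
      have hmlt : m < n := by omega
      rcases Nat.even_or_odd m with ⟨e, he⟩ | ⟨e, he⟩
      · have := (ih m hmlt).2 (by omega) ⟨e, he⟩
        omega
      · have := (ih m hmlt).1 ⟨e, he⟩
        omega
    omega

lemma sg_odd' (m v : ℕ) (h : m = 2 * v + 1) : sg m = v := by
  have := (sg_odd_even m).1 ⟨v, h⟩; omega

lemma mainAux (q b : ℕ) (hq : Odd q) (hb : 1 ≤ b)
    (hsmall : ∀ k, 2 ≤ k → k < q → Even k → ¬ k ∣ q * 2 ^ b →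
      2 * sg (q * 2 ^ b - k) + q + 1 ≠ q * 2 ^ b) :
    2 * sg (q * 2 ^ b) + q + 1 = q * 2 ^ b := by
  obtain ⟨c, hc⟩ := hq
  set n := q * 2 ^ b with hn
  have hpow : 2 ^ b = 2 * 2 ^ (b - 1) := by
    conv_lhs => rw [show b = (b - 1) + 1 by omega]
    ring
  set t := q * 2 ^ (b - 1) with htdef
  have hnt : n = 2 * t := by rw [hn, htdef, hpow]; ring
  have htq : q ≤ t := Nat.le_mul_of_pos_right q (Nat.pow_pos two_pos)
  clear_value n t
  have h : sg n = t - c - 1 := by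
    apply sg_eq_of
    · intro k hk1 hk2 hk3
      have hk2' : k ≠ n := fun h => hk3 (h ▸ dvd_refl n)
      set m := n - k with hm
      rcases Nat.even_or_odd k with hke | ⟨e, he⟩
      · rcases lt_or_ge k q with hlt | hge
        · obtain ⟨e, he⟩ := hke
          have := hsmall k (by omega) hlt ⟨e, he⟩ hk3
          rw [← hm] at this
          omega
        · obtain ⟨e, he⟩ := hke
          have hme : Even m := ⟨t - e, by omega⟩
          have := (sg_odd_even m).2 (by omega) hme
          omega
      · intro heq
        have hmo : Odd m := ⟨t - e - 1, by omega⟩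
        have := (sg_odd_even m).1 hmo
        have hkq : k = q := by omega
        apply hk3
        rw [hkq, hn]
        exact dvd_mul_right q (2 ^ b)
    · intro v hv
      have hvlt : 2 * v + 1 < n := by omega
      refine ⟨n - (2 * v + 1), by omega, by omega, ?_, ?_⟩
      · intro hdvd
        have hko : Odd (n - (2 * v + 1)) := ⟨t - v - 1, by omega⟩
        have hcop : Nat.Coprime (n - (2 * v + 1)) 2 :=
          Nat.coprime_two_right.mpr hko
        have hdq : (n - (2 * v + 1)) ∣ q :=
          (Nat.Coprime.dvd_of_dvd_mul_right (Nat.Coprime.pow_right b hcop) (hn ▸ hdvd))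
        have := Nat.le_of_dvd (by omega) hdq
        omega
      · rw [show n - (n - (2 * v + 1)) = 2 * v + 1 by omega]
        exact sg_odd' _ _ rfl
  omega

lemma sgq1 (b : ℕ) (hb : 1 ≤ b) : 2 * sg (2 ^ b) + 2 = 2 ^ b := by
  have h := mainAux 1 b ⟨0, rfl⟩ hb (by intro k hk2 hkq; omega)
  rw [one_mul] at h
  omega

lemma sg2 : sg 2 = 0 := by have h := sgq1 1 le_rfl; norm_num at h; omega
lemma sg4 : sg 4 = 1 := by have h := sgq1 2 (by norm_num); norm_num at h; omega
lemma sg8 : sg 8 = 3 := by have h := sgq1 3 (by norm_num); norm_num at h; omega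
lemma sg16 : sg 16 = 7 := by have h := sgq1 4 (by norm_num); norm_num at h; omega

lemma sgq3 (b : ℕ) (hb : 1 ≤ b) : 2 * sg (3 * 2 ^ b) + 4 = 3 * 2 ^ b := by
  have h := mainAux 3 b ⟨1, rfl⟩ hb ?_
  · omega
  · intro k hk2 hkq hke hkd
    exfalso; apply hkd
    have hk : k = 2 := by omega
    rw [hk]
    exact dvd_mul_of_dvd_right (dvd_pow_self 2 (by omega)) 3

lemma sg6 : sg 6 = 1 := by have h := sgq3 1 le_rfl; norm_num at h; omega
lemma sg12 : sg 12 = 4 := by have h := sgq3 2 (by norm_num); norm_num at h; omega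

lemma sgq5 (b : ℕ) (hb : 1 ≤ b) : 2 * sg (5 * 2 ^ b) + 6 = 5 * 2 ^ b := by
  have h := mainAux 5 b ⟨2, rfl⟩ hb ?_
  · omega
  · intro k hk2 hkq hke hkd
    obtain ⟨e, he⟩ := hke
    interval_cases k
    · exact absurd (dvd_mul_of_dvd_right (dvd_pow_self 2 (by omega)) 5) hkd
    · omega
    · rcases Nat.lt_or_ge b 2 with h1 | h2
      · have hb1 : b = 1 := by omega
        subst hb1
        intro hcon
        norm_num at hcon
        have := sg6
        omega
      · refine absurd (dvd_mul_of_dvd_right ?_ 5) hkd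
        have h4 := pow_dvd_pow 2 h2
        norm_num at h4
        exact h4

lemma sg10 : sg 10 = 2 := by have h := sgq5 1 le_rfl; norm_num at h; omega
lemma sg20 : sg 20 = 7 := by have h := sgq5 2 (by norm_num); norm_num at h; omega

lemma sg14 : sg 14 = 6 := by
  have o1 : sg 1 = 0 := sg_odd' 1 0 (by norm_num)
  have o3 : sg 3 = 1 := sg_odd' 3 1 (by norm_num)
  have o5 : sg 5 = 2 := sg_odd' 5 2 (by norm_num)
  have o9 : sg 9 = 4 := sg_odd' 9 4 (by norm_num)
  have o11 : sg 11 = 5 := sg_odd' 11 5 (by norm_num)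
  apply sg_eq_of
  · intro k hk1 hk2 hk3
    interval_cases k <;>
      first
        | exact absurd (by decide) hk3
        | norm_num [o1, o3, o5, o9, o11, sg2, sg4, sg6, sg8, sg10]
  · intro v hv
    interval_cases v
    · exact ⟨13, by norm_num, by norm_num, by decide, by norm_num [o1]⟩
    · exact ⟨11, by norm_num, by norm_num, by decide, by norm_num [o3]⟩
    · exact ⟨9, by norm_num, by norm_num, by decide, by norm_num [o5]⟩
    · exact ⟨6, by norm_num, by norm_num, by decide, by norm_num [sg8]⟩
    · exact ⟨5, by norm_num, by norm_num, by decide, by norm_num [o9]⟩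
    · exact ⟨3, by norm_num, by norm_num, by decide, by norm_num [o11]⟩

lemma sg18 : sg 18 = 4 := by
  have h := mainAux 9 1 ⟨4, rfl⟩ le_rfl ?_
  · norm_num at h; omega
  · intro k hk2 hkq hke hkd
    obtain ⟨e, he⟩ := hke
    interval_cases k
    · exact absurd (by decide) hkd
    · omega
    · intro hcon; norm_num at hcon; have := sg14; omega
    · omega
    · exact absurd (by decide) hkd
    · omega
    · intro hcon; norm_num at hcon; have := sg10; omega

lemma sg22 : sg 22 = 5 := by
  have o1 : sg 1 = 0 := sg_odd' 1 0 (by norm_num)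
  have o3 : sg 3 = 1 := sg_odd' 3 1 (by norm_num)
  have o5 : sg 5 = 2 := sg_odd' 5 2 (by norm_num)
  have o7 : sg 7 = 3 := sg_odd' 7 3 (by norm_num)
  have o9 : sg 9 = 4 := sg_odd' 9 4 (by norm_num)
  have o13 : sg 13 = 6 := sg_odd' 13 6 (by norm_num)
  have o15 : sg 15 = 7 := sg_odd' 15 7 (by norm_num)
  have o17 : sg 17 = 8 := sg_odd' 17 8 (by norm_num)
  have o19 : sg 19 = 9 := sg_odd' 19 9 (by norm_num)
  apply sg_eq_of
  · intro k hk1 hk2 hk3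
    interval_cases k <;>
      first
        | exact absurd (by decide) hk3
        | norm_num [o1, o3, o5, o7, o9, o13, o15, o17, o19,
            sg2, sg4, sg6, sg8, sg10, sg12, sg14, sg16, sg18]
  · intro v hv
    interval_cases v
    · exact ⟨21, by norm_num, by norm_num, by decide, by norm_num [o1]⟩
    · exact ⟨19, by norm_num, by norm_num, by decide, by norm_num [o3]⟩
    · exact ⟨17, by norm_num, by norm_num, by decide, by norm_num [o5]⟩
    · exact ⟨15, by norm_num, by norm_num, by decide, by norm_num [o7]⟩
    · exact ⟨13, by norm_num, by norm_num, by decide, by norm_num [o9]⟩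

lemma sg28 : sg 28 = 10 := by
  have o1 : sg 1 = 0 := sg_odd' 1 0 (by norm_num)
  have o7 : sg 7 = 3 := sg_odd' 7 3 (by norm_num)
  have o3 : sg 3 = 1 := sg_odd' 3 1 (by norm_num)
  have o5 : sg 5 = 2 := sg_odd' 5 2 (by norm_num)
  have o9 : sg 9 = 4 := sg_odd' 9 4 (by norm_num)
  have o11 : sg 11 = 5 := sg_odd' 11 5 (by norm_num)
  have o13 : sg 13 = 6 := sg_odd' 13 6 (by norm_num)
  have o15 : sg 15 = 7 := sg_odd' 15 7 (by norm_num)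
  have o17 : sg 17 = 8 := sg_odd' 17 8 (by norm_num)
  have o19 : sg 19 = 9 := sg_odd' 19 9 (by norm_num)
  have o23 : sg 23 = 11 := sg_odd' 23 11 (by norm_num)
  have o25 : sg 25 = 12 := sg_odd' 25 12 (by norm_num)
  apply sg_eq_of
  · intro k hk1 hk2 hk3
    interval_cases k <;>
      first
        | exact absurd (by decide) hk3
        | norm_num [o1, o3, o5, o7, o9, o11, o13, o15, o17, o19, o23, o25,
            sg2, sg4, sg6, sg8, sg10, sg12, sg16, sg18, sg20, sg22]
  · intro v hv
    interval_cases v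
    · exact ⟨27, by norm_num, by norm_num, by decide, by norm_num [o1]⟩
    · exact ⟨25, by norm_num, by norm_num, by decide, by norm_num [o3]⟩
    · exact ⟨23, by norm_num, by norm_num, by decide, by norm_num [o5]⟩
    · exact ⟨21, by norm_num, by norm_num, by decide, by norm_num [o7]⟩
    · exact ⟨19, by norm_num, by norm_num, by decide, by norm_num [o9]⟩
    · exact ⟨17, by norm_num, by norm_num, by decide, by norm_num [o11]⟩
    · exact ⟨15, by norm_num, by norm_num, by decide, by norm_num [o13]⟩
    · exact ⟨13, by norm_num, by norm_num, by decide, by norm_num [o15]⟩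
    · exact ⟨11, by norm_num, by norm_num, by decide, by norm_num [o17]⟩
    · exact ⟨9, by norm_num, by norm_num, by decide, by norm_num [o19]⟩

lemma sgq9 (b : ℕ) (hb : 1 ≤ b) : 2 * sg (9 * 2 ^ b) + 10 = 9 * 2 ^ b := by
  have h := mainAux 9 b ⟨4, rfl⟩ hb ?_
  · omega
  · intro k hk2 hkq hke hkd
    obtain ⟨e, he⟩ := hke
    interval_cases k
    · exact absurd (dvd_mul_of_dvd_right (dvd_pow_self 2 (by omega)) 9) hkd
    · omega
    · rcases Nat.lt_or_ge b 2 with h1 | h2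
      · have hb1 : b = 1 := by omega
        subst hb1
        intro hcon; norm_num at hcon
        have := sg14; omega
      · refine absurd (dvd_mul_of_dvd_right ?_ 9) hkd
        have h4 := pow_dvd_pow 2 h2
        norm_num at h4
        exact h4
    · omega
    · refine absurd ?_ hkd
      have h6 : (9:ℕ) * 2 ^ b = 6 * (3 * 2 ^ (b - 1)) := by
        conv_lhs => rw [show b = (b - 1) + 1 by omega]
        ring
      rw [h6]
      exact dvd_mul_right 6 _
    · omega
    · rcases Nat.lt_or_ge b 3 with h1 | h2
      · rcases Nat.lt_or_ge b 2 with h0 | h0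
        · have hb1 : b = 1 := by omega
          subst hb1
          intro hcon; norm_num at hcon
          have := sg10; omega
        · have hb2 : b = 2 := by omega
          subst hb2
          intro hcon; norm_num at hcon
          have := sg28; omega
      · refine absurd (dvd_mul_of_dvd_right ?_ 9) hkd
        have h8 := pow_dvd_pow 2 h2
        norm_num at h8
        exact h8

theorem saliquant_small_odd_part (a b : ℕ) (hb : 1 ≤ b)
    (ha : a = 0 ∨ a = 1 ∨ a = 2 ∨ a = 4) :
    sg ((2 * a + 1) * 2 ^ b) = (2 * a + 1) * 2 ^ (b - 1) - a - 1 := by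
  have hpow : (2:ℕ) ^ b = 2 * 2 ^ (b - 1) := by
    conv_lhs => rw [show b = (b - 1) + 1 by omega]
    ring
  have hP : 1 ≤ (2:ℕ) ^ (b - 1) := Nat.one_le_two_pow
  rcases ha with rfl | rfl | rfl | rfl
  · have h := sgq1 b hb
    norm_num
    omega
  · have h := sgq3 b hb
    norm_num
    omega
  · have h := sgq5 b hb
    norm_num
    omega
  · have h := sgq9 b hb
    norm_num
    omega
end

section
/- For every positive integer n, C(4n) = C(2n) + 1, where C(m) is the number of iterations of the map g(m) = m − φ(m) needed to reach 1 from m. -/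
/-- `g n = n - φ(n)`, the unique option in the game nontotient. -/
def g (n : ℕ) : ℕ := n - Nat.totient n

/-- `C n` is the least nonnegative integer `i` such that `g^[i] n = 1`. -/
noncomputable def C (n : ℕ) : ℕ := sInf {i : ℕ | g^[i] n = 1}

lemma g_lt (n : ℕ) (hn : 1 < n) : g n < n := by
  have := Nat.totient_pos.mpr (by omega : 0 < n)
  unfold g; omega

lemma g_pos (n : ℕ) (hn : 1 < n) : 1 ≤ g n := by
  have := Nat.totient_lt n hn
  unfold g; omega

lemma exists_iter (n : ℕ) (hn : 0 < n) : ∃ i, g^[i] n = 1 := by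
  induction n using Nat.strong_induction_on with
  | _ n ih =>
    rcases eq_or_lt_of_le (show 1 ≤ n from hn) with h | h
    · exact ⟨0, h.symm⟩
    · obtain ⟨i, hi⟩ := ih (g n) (g_lt n h) (g_pos n h)
      exact ⟨i + 1, by rwa [Function.iterate_succ_apply]⟩

lemma C_step (n : ℕ) (hn : 1 < n) : C n = C (g n) + 1 := by
  obtain ⟨i, hi⟩ := exists_iter (g n) (g_pos n hn)
  have hmem : C (g n) ∈ {i : ℕ | g^[i] (g n) = 1} := Nat.sInf_mem ⟨i, hi⟩
  unfold C
  apply le_antisymm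
  · apply Nat.sInf_le
    show g^[_] n = 1
    rwa [Function.iterate_succ_apply]
  · apply le_csInf ⟨i + 1, by rwa [Set.mem_setOf_eq, Function.iterate_succ_apply]⟩
    rintro j hj
    rcases j with _ | j
    · simp only [Set.mem_setOf_eq, Function.iterate_zero_apply] at hj; omega
    · rw [Set.mem_setOf_eq, Function.iterate_succ_apply] at hj
      have : sInf {i : ℕ | g^[i] (g n) = 1} ≤ j := Nat.sInf_le hj
      omega

lemma g_double (m : ℕ) (hm : Even m) : g (2 * m) = 2 * g m := by
  obtain ⟨k, rfl⟩ := hm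
  have h2 : (2 : ℕ) ∣ k + k := ⟨k, by ring⟩
  have := Nat.totient_mul_of_prime_of_dvd Nat.prime_two h2
  have hle : Nat.totient (k + k) ≤ k + k := Nat.totient_le _
  unfold g
  omega

lemma g_even (m : ℕ) (hm : Even m) (h2 : 2 < m) : Even (g m) := by
  have := Nat.totient_even h2
  have hle : Nat.totient m ≤ m := Nat.totient_le _
  obtain ⟨a, ha⟩ := hm
  obtain ⟨b, hb⟩ := this
  exact ⟨a - b, by unfold g; omega⟩

lemma key (m : ℕ) (hm : Even m) (h2 : 2 ≤ m) : C (2 * m) = C m + 1 := by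
  induction m using Nat.strong_induction_on with
  | _ m ih =>
    rcases eq_or_lt_of_le h2 with h | h
    · -- m = 2
      subst h
      have hg4 : g 4 = 2 := by decide
      rw [(by norm_num : 2 * 2 = 4), C_step 4 (by norm_num), hg4]
    · -- m > 2
      have hge : Even (g m) := g_even m hm h
      have hg1 : 1 ≤ g m := g_pos m (by omega)
      have hg2 : 2 ≤ g m := by
        rcases hge with ⟨a, ha⟩; omega
      have hlt : g m < m := g_lt m (by omega)
      have step2m : C (2 * m) = C (g (2 * m)) + 1 := C_step (2 * m) (by omega)
      rw [step2m, g_double m hm, ih (g m) hlt hge hg2, C_step m (by omega)]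

theorem nontotient_C_four_n (n : ℕ) (hn : 0 < n) : C (4 * n) = C (2 * n) + 1 := by
  have := key (2 * n) ⟨n, by ring⟩ (by omega)
  rw [← this]; ring_nf
end

section
/- If n is an even positive integer and i ≥ 1 is an integer with 2^(i−1) < n ≤ 2^i, then C(n) ≥ i, where C(m) is the number of iterations of the map g(m) = m − φ(m) needed to reach 1 from m. -/
lemma totient_half : ∀ n : ℕ, Even n → 2 * Nat.totient n ≤ n := by
  intro n
  induction n using Nat.strong_induction_on with
  | _ n IH =>
    rintro ⟨m, rfl⟩
    rcases Nat.eq_zero_or_pos m with rfl | hm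
    · simp
    have h2m : m + m = 2 * m := by ring
    rw [h2m]
    rcases Nat.even_or_odd m with he | ho
    · have := Nat.totient_mul_of_prime_of_dvd Nat.prime_two he.two_dvd
      rw [this]
      have := IH m (by omega) he
      omega
    · have hc : Nat.Coprime 2 m := Nat.coprime_two_left.mpr ho
      rw [Nat.totient_mul hc, Nat.totient_two, one_mul]
      have := Nat.totient_le m
      omega

lemma g_half {n : ℕ} (hn : Even n) : n ≤ 2 * g n := by
  have h1 := totient_half n hn
  have h2 := Nat.totient_le n
  unfold g; omega

lemma g_even_s18 {n : ℕ} (hn : Even n) (h4 : 2 < n) : Even (g n) :=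
  by
  rcases hn with ⟨a, ha⟩
  rcases Nat.totient_even h4 with ⟨b, hb⟩
  have hle := Nat.totient_le n
  exact ⟨a - b, by unfold g; omega⟩

lemma key_s18 : ∀ j n : ℕ, Even n → 2 ^ j < n → g^[j] n ≠ 1 := by
  intro j
  induction j with
  | zero => intro n _ h; simpa using by omega
  | succ j IH =>
    intro n hn h
    have hn4 : 4 ≤ n := by
      rcases hn with ⟨m, rfl⟩
      have : 2 ≤ 2 ^ (j + 1) := Nat.one_lt_two_pow (by omega)
      omega
    have hge : Even (g n) := g_even_s18 hn (by omega)
    have hgt : 2 ^ j < g n := by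
      have := g_half hn
      have : 2 ^ (j + 1) = 2 * 2 ^ j := by ring
      omega
    rw [Function.iterate_succ_apply]
    exact IH (g n) hge hgt

lemma reaches_one : ∀ n : ℕ, 0 < n → ∃ k, g^[k] n = 1 := by
  intro n
  induction n using Nat.strong_induction_on with
  | _ n IH =>
    intro hn
    rcases eq_or_lt_of_le (show 1 ≤ n from hn) with h1 | h1
    · exact ⟨0, by simp [← h1]⟩
    · have hlt : g n < n := by
        have := Nat.totient_pos.mpr hn
        unfold g; omega
      have hpos : 0 < g n := by
        have := Nat.totient_lt n h1
        unfold g; omega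
      obtain ⟨k, hk⟩ := IH (g n) hlt hpos
      exact ⟨k + 1, by rw [Function.iterate_succ_apply]; exact hk⟩

theorem nontotient_C_lower_bound (n i : ℕ) (hn : 0 < n) (heven : Even n)
    (hi : 1 ≤ i) (h1 : 2 ^ (i - 1) < n) (h2 : n ≤ 2 ^ i) : i ≤ C n := by
  apply le_csInf
  · obtain ⟨k, hk⟩ := reaches_one n hn
    exact ⟨k, hk⟩
  · intro b hb
    by_contra hbi
    push_neg at hbi
    have hble : b ≤ i - 1 := by omega
    have : 2 ^ b ≤ 2 ^ (i - 1) := Nat.pow_le_pow_right (by norm_num) hble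
    exact key_s18 b n heven (by omega) hb
end
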